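/- For every complex number τ, the linear map I_0^τ : ℂ[w] → ℂ[w] defined by I_0^τ f = ∑_{k≥0} (τ^k/(4^k k!)) f^{(2k)} (a finite sum) is a bijection with inverse I_0^{−τ}, and it is an algebra isomorphism from (ℂ[w], ·) with the ordinary product to (ℂ[w], *_τ): I_0^τ(f·g) = (I_0^τ f) *_τ (I_0^τ g) for all polynomials f, g. -/

import Mathlib

open Polynomial

/-- The `τ`-product `f *_τ g = ∑_{k≥0} (τ^k/(2^k k!)) f^{(k)} g^{(k)}` on `ℂ[w]`. -/
noncomputable def starProd (τ : ℂ) (f g : Polynomial ℂ) : Polynomial ℂ :=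
  ∑ k ∈ Finset.range (f.natDegree + 1),
    (τ ^ k / (2 ^ k * (k.factorial : ℂ))) • (derivative^[k] f * derivative^[k] g)

/-- The intertwiner `I_0^τ f = ∑_{k≥0} (τ^k/(4^k k!)) f^{(2k)}`; the sum is finite. -/
noncomputable def intertwiner (τ : ℂ) (f : Polynomial ℂ) : Polynomial ℂ :=
  ∑ k ∈ Finset.range (f.natDegree + 1),
    (τ ^ k / (4 ^ k * (k.factorial : ℂ))) • derivative^[2 * k] f

/-!
`I_τ = exp((τ/4) ∂²)` is linear, fixes constants, commutes with `∂`, and satisfies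
`I_τ (p X) = I_τ(p) X + (τ/2) I_τ(p)'` (from `∂^{2k}(pX) = ∂^{2k}(p) X + 2k ∂^{2k-1} p`).
Hence both the group law `I_σ ∘ I_τ = I_{σ+τ}` (giving `I_{-τ} = I_τ⁻¹`) and multiplicativity
follow by induction on `p` along `p ↦ p X`. For multiplicativity one needs that
`F ↦ F X + (τ/2) F' = F *_τ X` commutes with `*_τ g`, which comes down to the coefficient
identity `(k+1) c_{k+1} = (τ/2) c_k` for `c_k = τ^k/(2^k k!)`.
-/

open Finset

@[elab_as_elim]
theorem Polynomial.induction_on_mul_X {R : Type*} [Semiring R] {motive : R[X] → Prop} (p : R[X])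
    (C : ∀ a, motive (C a)) (add : ∀ p q, motive p → motive q → motive (p + q))
    (mul_X : ∀ p, motive p → motive (p * X)) : motive p :=
  Polynomial.induction_on p C add fun _ _ h => by rw [pow_succ, ← mul_assoc]; exact mul_X _ h

theorem Finset.sum_range_succ_eq_of_shift {M : Type*} [AddCommMonoid M] {u v : ℕ → M} (N : ℕ)
    (hu : u 0 = 0) (hv : v N = 0) (huv : ∀ k, u (k + 1) = v k) :
    ∑ k ∈ range (N + 1), u k = ∑ k ∈ range (N + 1), v k := by
  rw [sum_range_succ', hu, add_zero, sum_range_succ, hv, add_zero]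
  exact sum_congr rfl fun k _ => huv k

noncomputable def intertwinerCoeff (τ : ℂ) (k : ℕ) : ℂ := τ ^ k / (4 ^ k * k.factorial)

noncomputable def starCoeff (τ : ℂ) (k : ℕ) : ℂ := τ ^ k / (2 ^ k * k.factorial)

theorem intertwinerCoeff_succ_mul (τ : ℂ) (k : ℕ) :
    intertwinerCoeff τ (k + 1) * (2 * (k + 1) : ℕ) = τ / 2 * intertwinerCoeff τ k := by
  simp only [intertwinerCoeff, Nat.factorial_succ]
  push_cast
  field_simp
  ring

theorem starCoeff_succ_mul (τ : ℂ) (k : ℕ) :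
    starCoeff τ (k + 1) * (k + 1 : ℕ) = τ / 2 * starCoeff τ k := by
  simp only [starCoeff, Nat.factorial_succ]
  push_cast
  field_simp
  ring

theorem intertwiner_eq_sum_range (τ : ℂ) (f : ℂ[X]) {N : ℕ} (hN : f.natDegree < N) :
    intertwiner τ f = ∑ k ∈ range N, intertwinerCoeff τ k • derivative^[2 * k] f := by
  refine sum_subset (range_subset_range.2 hN) fun k _ hk => ?_
  rw [iterate_derivative_eq_zero (by simp at hk; omega), smul_zero]

theorem starProd_eq_sum_range (τ : ℂ) (f g : ℂ[X]) {N : ℕ} (hN : f.natDegree < N) :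
    starProd τ f g =
      ∑ k ∈ range N, starCoeff τ k • (derivative^[k] f * derivative^[k] g) := by
  refine sum_subset (range_subset_range.2 hN) fun k _ hk => ?_
  rw [iterate_derivative_eq_zero (by simp at hk; omega), zero_mul, smul_zero]

theorem intertwiner_add (τ : ℂ) (f g : ℂ[X]) :
    intertwiner τ (f + g) = intertwiner τ f + intertwiner τ g := by
  have hfg := natDegree_add_le f g
  set N := f.natDegree + g.natDegree + 1
  rw [intertwiner_eq_sum_range τ (f + g) (N := N) (by omega),
    intertwiner_eq_sum_range τ f (N := N) (by omega), intertwiner_eq_sum_range τ g (N := N) (by omega),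
    ← sum_add_distrib]
  simp only [iterate_map_add, smul_add]

theorem intertwiner_smul (τ a : ℂ) (f : ℂ[X]) :
    intertwiner τ (a • f) = a • intertwiner τ f := by
  rw [intertwiner_eq_sum_range τ (a • f) (Nat.lt_succ_of_le (natDegree_smul_le a f)),
    intertwiner_eq_sum_range τ f (Nat.lt_succ_self _), smul_sum]
  simp only [iterate_derivative_smul, smul_comm a]

theorem intertwiner_C (τ a : ℂ) : intertwiner τ (C a) = C a := by
  simp [intertwiner]

theorem intertwiner_zero_left (f : ℂ[X]) : intertwiner 0 f = f := by
  simp [intertwiner, sum_range_succ']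

theorem intertwiner_derivative (τ : ℂ) (f : ℂ[X]) :
    intertwiner τ (derivative f) = derivative (intertwiner τ f) := by
  rw [intertwiner_eq_sum_range τ f (Nat.lt_succ_self _),
    intertwiner_eq_sum_range τ _ ((natDegree_derivative_le f).trans_lt (Nat.sub_lt_succ _ _)),
    derivative_sum]
  refine sum_congr rfl fun k _ => ?_
  rw [derivative_smul, ← Function.iterate_succ_apply, Function.iterate_succ_apply']

theorem intertwiner_mul_X (τ : ℂ) (f : ℂ[X]) :
    intertwiner τ (f * X) = intertwiner τ f * X + (τ / 2) • derivative (intertwiner τ f) := by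
  set N := f.natDegree + 1
  have hfX : (f * X).natDegree < N + 1 := by
    have := natDegree_mul_le (p := f) (q := X); rw [natDegree_X] at this; omega
  rw [intertwiner_eq_sum_range τ _ hfX, intertwiner_eq_sum_range τ f (N := N + 1) (by omega),
    sum_mul, derivative_sum, smul_sum, ← sum_add_distrib]
  calc ∑ k ∈ range (N + 1), intertwinerCoeff τ k • derivative^[2 * k] (f * X)
      = ∑ k ∈ range (N + 1), intertwinerCoeff τ k • derivative^[2 * k] f * X +
          ∑ k ∈ range (N + 1), intertwinerCoeff τ k • (2 * k) • derivative^[2 * k - 1] f := by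
        simp only [iterate_derivative_mul_X, smul_add, smul_mul_assoc, sum_add_distrib]
    _ = ∑ k ∈ range (N + 1), intertwinerCoeff τ k • derivative^[2 * k] f * X +
          ∑ k ∈ range (N + 1), (τ / 2 * intertwinerCoeff τ k) • derivative^[2 * k + 1] f := by
        congr 1
        refine sum_range_succ_eq_of_shift N (by simp) ?_ fun k => ?_
        · rw [iterate_derivative_eq_zero (by omega), smul_zero]
        · rw [show 2 * (k + 1) - 1 = 2 * k + 1 by omega, ← Nat.cast_smul_eq_nsmul ℂ, smul_smul,
            intertwinerCoeff_succ_mul]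
    _ = _ := by
        rw [← sum_add_distrib]
        simp only [derivative_smul, smul_smul, Function.iterate_succ_apply']

theorem intertwiner_intertwiner (σ τ : ℂ) (f : ℂ[X]) :
    intertwiner σ (intertwiner τ f) = intertwiner (σ + τ) f := by
  induction f using Polynomial.induction_on_mul_X with
  | C a => simp only [intertwiner_C]
  | add p q hp hq => simp only [intertwiner_add, hp, hq]
  | mul_X p ih =>
    rw [intertwiner_mul_X τ, intertwiner_add, intertwiner_smul, intertwiner_mul_X,
      intertwiner_derivative, ih, intertwiner_mul_X, add_assoc, ← add_smul, add_div]

theorem starProd_C_left (τ a : ℂ) (g : ℂ[X]) : starProd τ (C a) g = C a * g := by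
  simp [starProd]

theorem starProd_add_left (τ : ℂ) (f₁ f₂ g : ℂ[X]) :
    starProd τ (f₁ + f₂) g = starProd τ f₁ g + starProd τ f₂ g := by
  have hf := natDegree_add_le f₁ f₂
  set N := f₁.natDegree + f₂.natDegree + 1
  rw [starProd_eq_sum_range τ (f₁ + f₂) g (N := N) (by omega),
    starProd_eq_sum_range τ f₁ g (N := N) (by omega),
    starProd_eq_sum_range τ f₂ g (N := N) (by omega), ← sum_add_distrib]
  simp only [iterate_map_add, add_mul, smul_add]

/-- `f * X + (τ / 2) • f'` is `f *_τ X`, so this is the associativity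
`(f *_τ X) *_τ g = (f *_τ g) *_τ X`. -/
theorem starProd_mul_X_add_left (τ : ℂ) (f g : ℂ[X]) :
    starProd τ (f * X + (τ / 2) • derivative f) g =
      starProd τ f g * X + (τ / 2) • derivative (starProd τ f g) := by
  set N := f.natDegree + 1
  have hfX : (f * X + (τ / 2) • derivative f).natDegree < N + 1 := by
    have h₁ := natDegree_mul_le (p := f) (q := X)
    have h₂ := (natDegree_smul_le (τ / 2) (derivative f)).trans (natDegree_derivative_le f)
    have h₃ := natDegree_add_le (f * X) ((τ / 2) • derivative f)
    rw [natDegree_X] at h₁; omega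
  rw [starProd_eq_sum_range τ _ g hfX, starProd_eq_sum_range τ f g (N := N + 1) (by omega),
    sum_mul, derivative_sum, smul_sum, ← sum_add_distrib]
  calc ∑ k ∈ range (N + 1),
        starCoeff τ k • (derivative^[k] (f * X + (τ / 2) • derivative f) * derivative^[k] g)
      = ∑ k ∈ range (N + 1), (starCoeff τ k • (derivative^[k] f * derivative^[k] g) * X +
            (τ / 2 * starCoeff τ k) • (derivative^[k + 1] f * derivative^[k] g)) +
          ∑ k ∈ range (N + 1), starCoeff τ k • (k • derivative^[k - 1] f * derivative^[k] g) := by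
        rw [← sum_add_distrib]
        refine sum_congr rfl fun k _ => ?_
        rw [iterate_map_add, iterate_derivative_mul_X, iterate_derivative_smul,
          ← Function.iterate_succ_apply derivative k f]
        simp only [add_mul, smul_add, smul_mul_assoc, mul_right_comm _ X, Nat.succ_eq_add_one]
        module
    _ = ∑ k ∈ range (N + 1), (starCoeff τ k • (derivative^[k] f * derivative^[k] g) * X +
            (τ / 2 * starCoeff τ k) • (derivative^[k + 1] f * derivative^[k] g)) +
          ∑ k ∈ range (N + 1),
            (τ / 2 * starCoeff τ k) • (derivative^[k] f * derivative^[k + 1] g) := by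
        congr 1
        refine sum_range_succ_eq_of_shift N (by simp) ?_ fun k => ?_
        · rw [iterate_derivative_eq_zero (p := f) (by omega), zero_mul, smul_zero]
        · rw [Nat.add_sub_cancel, ← Nat.cast_smul_eq_nsmul ℂ, smul_mul_assoc, smul_smul,
            starCoeff_succ_mul]
    _ = _ := by
        rw [← sum_add_distrib]
        refine sum_congr rfl fun k _ => ?_
        rw [derivative_smul, derivative_mul, ← Function.iterate_succ_apply' derivative k f,
          ← Function.iterate_succ_apply' derivative k g]
        module

theorem intertwiner_mul (τ : ℂ) (f g : ℂ[X]) :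
    intertwiner τ (f * g) = starProd τ (intertwiner τ f) (intertwiner τ g) := by
  induction f using Polynomial.induction_on_mul_X with
  | C a => rw [intertwiner_C, starProd_C_left, ← smul_eq_C_mul, intertwiner_smul, smul_eq_C_mul]
  | add p q hp hq => rw [add_mul, intertwiner_add, intertwiner_add, hp, hq, starProd_add_left]
  | mul_X p ih =>
    rw [mul_right_comm, intertwiner_mul_X, ih, intertwiner_mul_X, starProd_mul_X_add_left]

/-- `I_0^τ` is a linear bijection of `ℂ[w]` with inverse `I_0^{−τ}`, and is an
algebra isomorphism from `(ℂ[w], ·)` to `(ℂ[w], *_τ)`. -/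
theorem intertwiner_bijective_algebra_iso (τ : ℂ) :
    (∀ (a : ℂ) (f g : Polynomial ℂ),
      intertwiner τ (a • f + g) = a • intertwiner τ f + intertwiner τ g) ∧
    (∀ f : Polynomial ℂ, intertwiner (-τ) (intertwiner τ f) = f) ∧
    (∀ f : Polynomial ℂ, intertwiner τ (intertwiner (-τ) f) = f) ∧
    Function.Bijective (intertwiner τ) ∧
    (∀ f g : Polynomial ℂ,
      intertwiner τ (f * g) = starProd τ (intertwiner τ f) (intertwiner τ g)) := by
  have left_inv (f : ℂ[X]) : intertwiner (-τ) (intertwiner τ f) = f := by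
    rw [intertwiner_intertwiner, neg_add_cancel, intertwiner_zero_left]
  have right_inv (f : ℂ[X]) : intertwiner τ (intertwiner (-τ) f) = f := by
    rw [intertwiner_intertwiner, add_neg_cancel, intertwiner_zero_left]
  exact ⟨fun a f g => by rw [intertwiner_add, intertwiner_smul], left_inv, right_inv,
    Function.bijective_iff_has_inverse.mpr ⟨_, left_inv, right_inv⟩, intertwiner_mul τ⟩
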